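/- arXiv:1511.08915 — 5 statements merged into one kernel-verified Lean document; each statement's English description precedes it below -/
import Mathlib

section
/- Suppose rule r = p(t⃗) ← e₁(t⃗₁),…,eₙ(t⃗ₙ), q₁(s⃗₁),…,q_m(s⃗_m) is applied at step i+1 via one of its SNE variants with ranges [l_a,u_a] for its IDB body atoms, let o ∈ [l_k,u_k] be a step at which rule r(o) was applied, and suppose that for every σ ∈ R_k the atom q_k(s⃗_k)σ does not unify with the head of r(o) (variables renamed apart). Then the set of facts derived by this SNE variant is unchanged when the relation Δ^{[l_k,u_k]}_{q_k} used for the atom q_k(s⃗_k) is replaced by Δ^{[l_k,u_k]}_{q_k} \ Δ^o_{q_k}. -/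
namespace Datalog

/-- A term is a constant or a variable. -/
inductive Term (C V : Type) where
  | const : C → Term C V
  | var : V → Term C V

/-- An atom `p(t⃗)` with `|t⃗| = ar p`. -/
structure Atom (Pred C V : Type) (ar : Pred → ℕ) where
  pred : Pred
  args : List (Term C V)
  hlen : args.length = ar pred

/-- A fact is a variable-free atom. -/
structure Fact (Pred C : Type) (ar : Pred → ℕ) where
  pred : Pred
  args : List C
  hlen : args.length = ar pred

variable {Pred C V : Type} {ar : Pred → ℕ}

/-- Applying a ground substitution `g : V → C` to a term. -/
def Term.grnd (g : V → C) : Term C V → C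
  | .const c => c
  | .var v => g v

/-- Applying a ground substitution to an atom yields a fact. -/
def Atom.grnd (g : V → C) (a : Atom Pred C V ar) : Fact Pred C ar :=
  ⟨a.pred, a.args.map (Term.grnd g), by simp [a.hlen]⟩

/-- Applying a (general) substitution `σ : V → Term C V` to a term. -/
def Term.subst (σ : V → Term C V) : Term C V → Term C V
  | .const c => .const c
  | .var v => σ v

/-- Applying a substitution to an atom. -/
def Atom.subst (σ : V → Term C V) (a : Atom Pred C V ar) : Atom Pred C V ar :=
  ⟨a.pred, a.args.map (Term.subst σ), by simp [a.hlen]⟩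

/-- The variables of a term. -/
def Term.vars : Term C V → Set V
  | .const _ => ∅
  | .var v => {v}

/-- The variables of an atom. -/
def Atom.vars (a : Atom Pred C V ar) : Set V := ⋃ t ∈ a.args, Term.vars t

/-- An atom is ground if all of its arguments are constants. -/
def Atom.isGround (a : Atom Pred C V ar) : Prop := ∀ t ∈ a.args, ∃ c, t = Term.const c

/-- The ground atom corresponding to a fact. -/
def Fact.toAtom (f : Fact Pred C ar) : Atom Pred C V ar :=
  ⟨f.pred, f.args.map Term.const, by simp [f.hlen]⟩

/-- Two atoms unify if some substitution maps them to the same atom. -/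
def unifiable (A B : Atom Pred C V ar) : Prop :=
  ∃ σ : V → Term C V, Atom.subst σ A = Atom.subst σ B

/-- `θ` is a most general unifier of `A` and `B`. -/
def isMGU (θ : V → Term C V) (A B : Atom Pred C V ar) : Prop :=
  Atom.subst θ A = Atom.subst θ B ∧
    ∀ η : V → Term C V, Atom.subst η A = Atom.subst η B →
      ∃ δ : V → Term C V, ∀ v, η v = Term.subst δ (θ v)

/-- A rule `H ← B₁, …, Bₙ`. -/
structure Rule (Pred C V : Type) (ar : Pred → ℕ) where
  head : Atom Pred C V ar
  body : List (Atom Pred C V ar)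

/-- A rule is safe if every variable of the head occurs in some body atom. -/
def Rule.safe (r : Rule Pred C V ar) : Prop :=
  r.head.vars ⊆ ⋃ b ∈ r.body, Atom.vars b

/-- Applying a substitution to a rule. -/
def Rule.subst (σ : V → Term C V) (r : Rule Pred C V ar) : Rule Pred C V ar :=
  ⟨Atom.subst σ r.head, r.body.map (Atom.subst σ)⟩

/-- A rule is trivially redundant if its head atom occurs among its body atoms. -/
def Rule.trivRedundant (r : Rule Pred C V ar) : Prop := r.head ∈ r.body

/-- The ground substitution `g` viewed as a substitution. -/
def grndSub (g : V → C) : V → Term C V := fun v => Term.const (g v)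

/-- `r(J) = { Hσ | Hσ is a fact and Bᵢσ ∈ J for all i }`. -/
def Rule.app (r : Rule Pred C V ar) (J : Set (Fact Pred C ar)) : Set (Fact Pred C ar) :=
  { f | ∃ g : V → C, f = Atom.grnd g r.head ∧ ∀ b ∈ r.body, Atom.grnd g b ∈ J }

/-- `P(J) = ⋃_{r ∈ P} r(J)`. -/
def progApp (Prog : Set (Rule Pred C V ar)) (J : Set (Fact Pred C ar)) :
    Set (Fact Pred C ar) :=
  ⋃ r ∈ Prog, Rule.app r J

/-- `P⁰(I) = I`, `P^{i+1}(I) = Pⁱ(I) ∪ P(Pⁱ(I))`. -/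
def iter (Prog : Set (Rule Pred C V ar)) (I : Set (Fact Pred C ar)) :
    ℕ → Set (Fact Pred C ar)
  | 0 => I
  | n + 1 => iter Prog I n ∪ progApp Prog (iter Prog I n)

/-- The materialization `P^∞(I) = ⋃_i Pⁱ(I)`. -/
def mat (Prog : Set (Rule Pred C V ar)) (I : Set (Fact Pred C ar)) :
    Set (Fact Pred C ar) :=
  ⋃ n, iter Prog I n

/-- Naive rule-by-rule evaluation: `P̂⁰(I) = I`,
`P̂^{ℓ+1}(I) = P̂^ℓ(I) ∪ r(ℓ+1)(P̂^ℓ(I))`. -/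
def naive (seq : ℕ → Rule Pred C V ar) (I : Set (Fact Pred C ar)) :
    ℕ → Set (Fact Pred C ar)
  | 0 => I
  | ℓ + 1 => naive seq I ℓ ∪ Rule.app (seq (ℓ + 1)) (naive seq I ℓ)

/-! ## Rules in EDB/IDB form and semi-naive evaluation -/

/-- A rule `p(t⃗) ← e₁(t⃗₁), …, eₙ(t⃗ₙ), q₁(s⃗₁), …, q_m(s⃗_m)` where the
`eᵢ` are EDB atoms and the `qᵢ` are IDB atoms. -/
structure SRule (Pred C V : Type) (ar : Pred → ℕ) where
  head : Atom Pred C V ar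
  ebody : List (Atom Pred C V ar)
  ibody : List (Atom Pred C V ar)

/-- The plain rule corresponding to an EDB/IDB-structured rule. -/
def SRule.toRule (r : SRule Pred C V ar) : Rule Pred C V ar := ⟨r.head, r.ebody ++ r.ibody⟩

/-- Safety of a structured rule. -/
def SRule.safe (r : SRule Pred C V ar) : Prop := r.toRule.safe

/-- The variables of a structured rule. -/
def SRule.vars (r : SRule Pred C V ar) : Set V :=
  r.head.vars ∪ ((⋃ a ∈ r.ebody, Atom.vars a) ∪ ⋃ a ∈ r.ibody, Atom.vars a)

/-- Renaming the variables of a structured rule along `ι`. -/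
def SRule.rename (ι : V → V) (r : SRule Pred C V ar) : SRule Pred C V ar :=
  ⟨Atom.subst (fun v => Term.var (ι v)) r.head,
   r.ebody.map (Atom.subst (fun v => Term.var (ι v))),
   r.ibody.map (Atom.subst (fun v => Term.var (ι v)))⟩

/-- A predicate is intensional (IDB) for a program if it occurs in the head of a rule. -/
def isIDB (Prog : Set (SRule Pred C V ar)) (p : Pred) : Prop :=
  ∃ r ∈ Prog, r.head.pred = p

/-- `P(J)` for a program of structured rules. -/
def sprogApp (Prog : Set (SRule Pred C V ar)) (J : Set (Fact Pred C ar)) :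
    Set (Fact Pred C ar) :=
  ⋃ r ∈ Prog, Rule.app r.toRule J

/-- `Pⁱ(I)` for a program of structured rules. -/
def siter (Prog : Set (SRule Pred C V ar)) (I : Set (Fact Pred C ar)) :
    ℕ → Set (Fact Pred C ar)
  | 0 => I
  | n + 1 => siter Prog I n ∪ sprogApp Prog (siter Prog I n)

/-- `P^∞(I)` for a program of structured rules. -/
def smat (Prog : Set (SRule Pred C V ar)) (I : Set (Fact Pred C ar)) :
    Set (Fact Pred C ar) :=
  ⋃ n, siter Prog I n

/-- Naive rule-by-rule evaluation for structured rules. -/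
def naiveS (seq : ℕ → SRule Pred C V ar) (I : Set (Fact Pred C ar)) :
    ℕ → Set (Fact Pred C ar)
  | 0 => I
  | ℓ + 1 => naiveS seq I ℓ ∪ Rule.app (seq (ℓ + 1)).toRule (naiveS seq I ℓ)

/-- `Δ^{[l,u]} := ⋃_{k ∈ [l,u]} Δ^k`. -/
def cumRange (D : ℕ → Set (Fact Pred C ar)) (l u : ℕ) : Set (Fact Pred C ar) :=
  ⋃ k ∈ Set.Icc l u, D k

/-- The step `j < i` at which the rule applied at step `i` was last applied
(`j = 0` if it was never applied before). -/
noncomputable def lastApp (seq : ℕ → SRule Pred C V ar) (i : ℕ) : ℕ :=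
  sSup {k | 1 ≤ k ∧ k < i ∧ seq k = seq i}

/-- The set `tmp_p` of facts derived by the semi-naive application at step `i+1` of a rule
`r` that was last applied at step `j`, given the family `D` of previously derived
`Δ`-sets: all facts `p(t⃗)σ` for ground `σ` such that all EDB atoms match in `I` and,
for some `ℓ ∈ {1,…,m}`, `s⃗_aσ ∈ Δ^{[0,i]}` for `a < ℓ`, `s⃗_ℓσ ∈ Δ^{[j,i]}`, and
`s⃗_aσ ∈ Δ^{[0,j-1]}` for `a > ℓ`. (A rule without IDB body atoms is evaluated over
`I` alone.) -/
def sneTmp (I : Set (Fact Pred C ar)) (r : SRule Pred C V ar) (j i : ℕ)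
    (D : ℕ → Set (Fact Pred C ar)) : Set (Fact Pred C ar) :=
  { f | ∃ g : V → C, f = Atom.grnd g r.head ∧ (∀ e ∈ r.ebody, Atom.grnd g e ∈ I) ∧
      (r.ibody = [] ∨
        ∃ ℓ : Fin r.ibody.length,
          (∀ a : Fin r.ibody.length, a < ℓ →
              Atom.grnd g (r.ibody.get a) ∈ cumRange D 0 i) ∧
          Atom.grnd g (r.ibody.get ℓ) ∈ cumRange D j i ∧
          (∀ a : Fin r.ibody.length, ℓ < a →
              Atom.grnd g (r.ibody.get a) ∈ cumRange D 0 (j - 1))) }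

/-- The history of the one-rule-per-step semi-naive evaluation: `sneHist seq I i k` is
the set `Δ^k` of new facts derived at step `k`, as computed after `i` steps
(`Δ⁰ = I`; at step `i+1` the rule `seq (i+1)` is applied and
`Δ^{i+1} = tmp \ Δ^{[0,i]}`). -/
noncomputable def sneHist (seq : ℕ → SRule Pred C V ar) (I : Set (Fact Pred C ar)) :
    ℕ → ℕ → Set (Fact Pred C ar)
  | 0 => fun k => if k = 0 then I else ∅
  | i + 1 => fun k =>
      if k = i + 1 then
        sneTmp I (seq (i + 1)) (lastApp seq (i + 1)) i (sneHist seq I i) \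
          cumRange (sneHist seq I i) 0 i
      else sneHist seq I i k

/-- `Δ^i`: the set of new facts derived at step `i` of the semi-naive evaluation. -/
noncomputable def sneDelta (seq : ℕ → SRule Pred C V ar) (I : Set (Fact Pred C ar))
    (i : ℕ) : Set (Fact Pred C ar) :=
  sneHist seq I i i

/-- The SNE variant of rule `r` with one relation `Rel a` prescribed for each IDB body
atom: it derives all facts `p(t⃗)σ` for ground `σ` such that all EDB atoms match in `I`
and `s⃗_aσ ∈ Rel a` for every IDB body atom `q_a(s⃗_a)`. -/
def sneVariant (I : Set (Fact Pred C ar)) (r : SRule Pred C V ar)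
    (Rel : ℕ → Set (Fact Pred C ar)) : Set (Fact Pred C ar) :=
  { f | ∃ g : V → C, f = Atom.grnd g r.head ∧ (∀ e ∈ r.ebody, Atom.grnd g e ∈ I) ∧
      ∀ a : Fin r.ibody.length, Atom.grnd g (r.ibody.get a) ∈ Rel a }

/-- `R_k`: the partial left-to-right join, i.e. the ground substitutions matching all
EDB atoms in `I` and the first `k` IDB body atoms in their prescribed relations. -/
def partialJoin (I : Set (Fact Pred C ar)) (r : SRule Pred C V ar)
    (Rel : ℕ → Set (Fact Pred C ar)) (k : ℕ) : Set (V → C) :=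
  { g | (∀ e ∈ r.ebody, Atom.grnd g e ∈ I) ∧
      ∀ a : Fin r.ibody.length, (a : ℕ) < k → Atom.grnd g (r.ibody.get a) ∈ Rel a }

/-- The resolvent of `r` with the (already renamed-apart) rule `ro` on the `k`-th IDB
body atom of `r`, using the unifier `θ`. -/
def resolvent (r ro : SRule Pred C V ar) (k : ℕ) (θ : V → Term C V) :
    Rule Pred C V ar :=
  ⟨Atom.subst θ r.head,
   ((r.ebody ++ r.ibody.take k) ++ (ro.ebody ++ ro.ibody) ++ r.ibody.drop (k + 1)).map
     (Atom.subst θ)⟩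


lemma toAtom_grnd (g : V → C) (a : Atom Pred C V ar) :
    (Fact.toAtom (Atom.grnd g a) : Atom Pred C V ar) = Atom.subst (grndSub g) a := by
  simp only [Fact.toAtom, Atom.grnd, Atom.subst, List.map_map]
  congr 1
  apply List.map_congr_left
  intro t _
  cases t <;> rfl

lemma subst_toAtom (σ : V → Term C V) (f : Fact Pred C ar) :
    Atom.subst σ (Fact.toAtom f : Atom Pred C V ar) = Fact.toAtom f := by
  simp only [Fact.toAtom, Atom.subst, List.map_map]
  rfl

/-- **Mismatching rules.** Suppose rule `r` is applied at step `i+1` via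
one of its SNE variants with ranges `[l_a, u_a]` for its IDB body atoms, let
`o ∈ [l_k, u_k]` be a step at which rule `r(o)` was applied, and suppose that for every
`σ ∈ R_k` the atom `q_k(s⃗_k)σ` does not unify with the head of `r(o)` (variables
renamed apart; here `q_k(s⃗_k)σ` is ground, so this is automatic). Then the set of
facts derived by this SNE variant is unchanged when the relation `Δ^{[l_k,u_k]}_{q_k}`
used for the atom `q_k(s⃗_k)` is replaced by `Δ^{[l_k,u_k]}_{q_k} \ Δ^o_{q_k}`. -/
theorem mismatching_rules_optimization {Pred C V : Type} [Infinite C] [Infinite V]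
    {ar : Pred → ℕ}
    (Prog : Set (SRule Pred C V ar)) (hfin : Prog.Finite)
    (hsafe : ∀ r ∈ Prog, r.safe)
    (hstruct : ∀ r ∈ Prog, (∀ a ∈ r.ebody, ¬ isIDB Prog a.pred) ∧
      ∀ a ∈ r.ibody, isIDB Prog a.pred)
    (I : Set (Fact Pred C ar)) (hI : I.Finite)
    (hIedb : ∀ f ∈ I, ¬ isIDB Prog f.pred)
    (seq : ℕ → SRule Pred C V ar) (hseq : ∀ k, 1 ≤ k → seq k ∈ Prog)
    (i : ℕ) (r : SRule Pred C V ar) (hr : r = seq (i + 1))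
    (l u : ℕ → ℕ) (k : Fin r.ibody.length)
    (o : ℕ) (ho1 : 1 ≤ o) (hol : l k ≤ o) (hou : o ≤ u k)
    (hmis : ∀ g ∈ partialJoin I r (fun a => cumRange (sneDelta seq I) (l a) (u a)) k,
      ¬ unifiable (Fact.toAtom (Atom.grnd g (r.ibody.get k)) : Atom Pred C V ar)
        (seq o).head) :
    sneVariant I r (fun a => cumRange (sneDelta seq I) (l a) (u a)) =
    sneVariant I r (fun a =>
      if a = (k : ℕ) then cumRange (sneDelta seq I) (l a) (u a) \ sneDelta seq I o
      else cumRange (sneDelta seq I) (l a) (u a)) := by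
  ext f
  constructor
  · rintro ⟨g, hf, he, hi⟩
    refine ⟨g, hf, he, ?_⟩
    intro a
    by_cases hak : (a : ℕ) = (k : ℕ)
    · have hA : a = k := Fin.ext hak
      subst hA
      simp only [hak, if_pos]
      refine ⟨hi a, ?_⟩
      intro hmem
      -- facts in Δ^o come from applying (seq o), i.e. have the form grnd g' (seq o).head
      obtain ⟨o', rfl⟩ : ∃ o', o = o' + 1 := ⟨o - 1, (Nat.succ_pred_eq_of_pos ho1).symm⟩
      have : sneDelta seq I (o' + 1) =
          sneTmp I (seq (o' + 1)) (lastApp seq (o' + 1)) o' (sneHist seq I o') \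
            cumRange (sneHist seq I o') 0 o' := by
        simp [sneDelta, sneHist]
      rw [this] at hmem
      obtain ⟨⟨g', hg', -⟩, -⟩ := hmem
      refine hmis g ⟨he, fun b _ => hi b⟩ ⟨grndSub g', ?_⟩
      rw [subst_toAtom, hg', toAtom_grnd]
    · simpa only [hak, if_neg, not_false_iff] using hi a
  · rintro ⟨g, hf, he, hi⟩
    refine ⟨g, hf, he, fun a => ?_⟩
    have := hi a
    by_cases hak : (a : ℕ) = (k : ℕ)
    · simp only [hak, if_pos] at this
      show Atom.grnd g (r.ibody.get a) ∈ cumRange (sneDelta seq I) (l ↑a) (u ↑a)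
      rw [hak]
      exact this.1
    · simpa only [hak, if_neg, not_false_iff] using this
end Datalog
end

section
/- For every program P, database instance I, and sequence r(1), r(2), … of rules of P: if 0 = i₀ < i₁ < i₂ < … is a sequence of indices such that every rule of P occurs among r(i_k+1), …, r(i_{k+1}) for every k ≥ 0, then P^ℓ(I) ⊆ P̂^{i_ℓ}(I) for every ℓ ≥ 0. -/
namespace Datalog

variable {Pred C V : Type} {ar : Pred → ℕ}

lemma Rule.app_mono {Pred C V : Type} {ar : Pred → ℕ} (r : Rule Pred C V ar)
    {J K : Set (Fact Pred C ar)} (h : J ⊆ K) : r.app J ⊆ r.app K := by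
  rintro f ⟨g, hf, hb⟩
  exact ⟨g, hf, fun b hb' => h (hb b hb')⟩

lemma naive_mono {Pred C V : Type} {ar : Pred → ℕ} (seq : ℕ → Rule Pred C V ar)
    (I : Set (Fact Pred C ar)) {a b : ℕ} (h : a ≤ b) :
    naive seq I a ⊆ naive seq I b := by
  induction b with
  | zero => simp_all
  | succ n ih =>
    rcases Nat.lt_or_ge a (n+1) with h' | h'
    · exact (ih (Nat.lt_succ_iff.mp h')).trans (Set.subset_union_left)
    · have : a = n + 1 := le_antisymm h h'
      subst this; rfl

/-- If `0 = i₀ < i₁ < i₂ < …` is a sequence of indices such that every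
rule of `P` occurs among `r(i_k+1), …, r(i_{k+1})` for every `k ≥ 0`, then
`P^ℓ(I) ⊆ P̂^{i_ℓ}(I)` for every `ℓ ≥ 0`. -/
theorem iter_subset_naive_of_cover {Pred C V : Type} [Infinite C] [Infinite V]
    {ar : Pred → ℕ}
    (Prog : Set (Rule Pred C V ar)) (hfin : Prog.Finite)
    (hsafe : ∀ r ∈ Prog, r.safe)
    (I : Set (Fact Pred C ar)) (hI : I.Finite)
    (seq : ℕ → Rule Pred C V ar) (hseq : ∀ i, 1 ≤ i → seq i ∈ Prog)
    (idx : ℕ → ℕ) (hidx0 : idx 0 = 0) (hmono : StrictMono idx)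
    (hcover : ∀ k, ∀ r ∈ Prog, ∃ j, idx k < j ∧ j ≤ idx (k + 1) ∧ seq j = r) :
    ∀ ℓ, iter Prog I ℓ ⊆ naive seq I (idx ℓ) := by
  intro ℓ
  induction ℓ with
  | zero => rw [hidx0]; exact subset_rfl
  | succ n ih =>
    intro f hf
    rcases hf with hf | hf
    · exact naive_mono seq I (le_of_lt (hmono (Nat.lt_succ_self n))) (ih hf)
    · rcases hf with ⟨S, ⟨r, rfl⟩, hS⟩
      simp only [Set.mem_iUnion] at hS
      rcases hS with ⟨hr, hf⟩
      obtain ⟨j, hj1, hj2, hj3⟩ := hcover n r hr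
      obtain ⟨m, rfl⟩ : ∃ m, j = m + 1 := ⟨j - 1, (Nat.succ_pred_eq_of_pos (Nat.lt_of_le_of_lt (Nat.zero_le _) hj1)).symm⟩
      have hle : idx n ≤ m := Nat.lt_succ_iff.mp hj1
      have hsub : iter Prog I n ⊆ naive seq I m :=
        ih.trans (naive_mono seq I hle)
      have : f ∈ Rule.app (seq (m+1)) (naive seq I m) := by
        rw [hj3]; exact Rule.app_mono r hsub hf
      have : f ∈ naive seq I (m+1) := Or.inr this
      exact naive_mono seq I hj2 this

end Datalog
end

section
/- The one-rule-per-step semi-naive evaluation produces exactly the same inferences as the naive rule-by-rule evaluation based on the same fair sequence of rules: for every program P, database instance I, fair sequence r(1), r(2), … of rules of P, every predicate p, and every step i ≥ 0, the set Δ^{[0,i]}_p computed by SNE equals the set of facts with predicate p contained in P̂ⁱ(I). -/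
namespace Datalog

variable {Pred C V : Type} {ar : Pred → ℕ}

/-! By induction on `i`, `Δ^{[0,i+1]} = Δ^{[0,i]} ∪ tmp`. Every premise used by `tmp` lies in
`Δ^{[0,i]}`, so `tmp` is contained in one naive step. Conversely, a ground instance of the rule
`r(i+1)` with premises in `Δ^{[0,i]}` either has an IDB premise outside `Δ^{[0,j-1]}`, where `j`
is the last application of that rule, and then the last such premise plays the role of `ℓ`, or
it has none, and then the same instance was already evaluated at step `j`. -/

section CumRange

variable {D D' : ℕ → Set (Fact Pred C ar)} {l u : ℕ}

lemma mem_cumRange {f : Fact Pred C ar} :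
    f ∈ cumRange D l u ↔ ∃ k, l ≤ k ∧ k ≤ u ∧ f ∈ D k := by
  simp [cumRange, and_assoc]

lemma cumRange_zero_zero : cumRange D 0 0 = D 0 := by
  ext f
  simp [mem_cumRange]

lemma cumRange_succ (h : l ≤ u + 1) : cumRange D l (u + 1) = cumRange D l u ∪ D (u + 1) := by
  ext f
  simp only [mem_cumRange, Set.mem_union]
  constructor
  · rintro ⟨k, hlk, hku, hf⟩
    rcases Nat.lt_or_ge k (u + 1) with hk | hk
    · exact Or.inl ⟨k, hlk, by omega, hf⟩
    · exact Or.inr (by rwa [show k = u + 1 by omega] at hf)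
  · rintro (⟨k, hlk, hku, hf⟩ | hf)
    · exact ⟨k, hlk, by omega, hf⟩
    · exact ⟨u + 1, h, le_rfl, hf⟩

lemma cumRange_mono {l' u' : ℕ} (hl : l' ≤ l) (hu : u ≤ u') :
    cumRange D l u ⊆ cumRange D l' u' := by
  intro f hf
  obtain ⟨k, hlk, hku, hf⟩ := mem_cumRange.mp hf
  exact mem_cumRange.mpr ⟨k, hl.trans hlk, hku.trans hu, hf⟩

lemma cumRange_subset_union (j : ℕ) :
    cumRange D 0 u ⊆ cumRange D 0 (j - 1) ∪ cumRange D j u := by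
  intro f hf
  obtain ⟨k, -, hku, hf⟩ := mem_cumRange.mp hf
  rcases Nat.lt_or_ge k j with hk | hk
  · exact Or.inl (mem_cumRange.mpr ⟨k, Nat.zero_le k, by omega, hf⟩)
  · exact Or.inr (mem_cumRange.mpr ⟨k, hk, hku, hf⟩)

lemma cumRange_congr (h : ∀ k ≤ u, D k = D' k) : cumRange D l u = cumRange D' l u := by
  ext f
  simp only [mem_cumRange]
  exact exists_congr fun k => and_congr_right fun _ =>
    and_congr_right fun hk => by rw [h k hk]

end CumRange

section SemiNaive

variable (I : Set (Fact Pred C ar)) (r : SRule Pred C V ar) {D : ℕ → Set (Fact Pred C ar)}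
  {j i : ℕ}

lemma sneTmp_congr {D' : ℕ → Set (Fact Pred C ar)} (hj : j ≤ i + 1)
    (h : ∀ k ≤ i, D k = D' k) : sneTmp I r j i D = sneTmp I r j i D' := by
  rw [sneTmp, sneTmp, cumRange_congr h, cumRange_congr h,
    cumRange_congr fun k hk => h k (by omega)]

lemma sneTmp_subset_app (hj : j ≤ i + 1) (hI : I ⊆ cumRange D 0 i) :
    sneTmp I r j i D ⊆ r.toRule.app (cumRange D 0 i) := by
  rintro f ⟨g, rfl, hedb, hidb⟩
  refine ⟨g, rfl, fun b hb => ?_⟩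
  rcases List.mem_append.mp hb with hb | hb
  · exact hI (hedb b hb)
  obtain ⟨a, rfl⟩ := List.mem_iff_get.mp hb
  rcases hidb with hnil | ⟨ℓ, hlt, hℓ, hgt⟩
  · exact absurd a.2 (by simp [hnil])
  rcases lt_trichotomy a ℓ with ha | rfl | ha
  · exact hlt a ha
  · exact cumRange_mono (Nat.zero_le j) le_rfl hℓ
  · exact cumRange_mono le_rfl (by omega) (hgt a ha)

variable {I r}

/-- Choosing `ℓ` as the last IDB atom that is new since step `j` puts every later atom
in `Δ^{[0,j-1]}`. -/
lemma head_mem_sneTmp_of_exists_new {g : V → C} (hedb : ∀ e ∈ r.ebody, Atom.grnd g e ∈ I)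
    (hidb : ∀ a, Atom.grnd g (r.ibody.get a) ∈ cumRange D 0 i)
    (hnew : ∃ a, Atom.grnd g (r.ibody.get a) ∉ cumRange D 0 (j - 1)) :
    Atom.grnd g r.head ∈ sneTmp I r j i D := by
  classical
  obtain ⟨ℓ, hℓ, hmax⟩ := (Finset.univ.filter fun a =>
    Atom.grnd g (r.ibody.get a) ∉ cumRange D 0 (j - 1)).exists_max_image id
      (by simpa [Finset.filter_nonempty_iff] using hnew)
  simp only [Finset.mem_filter, Finset.mem_univ, true_and, id] at hℓ hmax
  refine ⟨g, rfl, hedb, Or.inr ⟨ℓ, fun a _ => hidb a, ?_, fun a ha => ?_⟩⟩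
  · exact (cumRange_subset_union j (hidb ℓ)).resolve_left hℓ
  · by_contra hold
    exact absurd (hmax a hold) (not_le.mpr ha)

/-- With `j = 0`, the last IDB atom is the right choice of `ℓ`: note that `Δ^{[0,j-1]}`
is then `Δ⁰`, not `∅`. -/
lemma head_mem_sneTmp_of_zero {g : V → C} (hedb : ∀ e ∈ r.ebody, Atom.grnd g e ∈ I)
    (hidb : ∀ a, Atom.grnd g (r.ibody.get a) ∈ cumRange D 0 i) :
    Atom.grnd g r.head ∈ sneTmp I r 0 i D := by
  refine ⟨g, rfl, hedb, ?_⟩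
  by_cases hnil : r.ibody = []
  · exact Or.inl hnil
  have hpos : 0 < r.ibody.length := List.length_pos_iff.mpr hnil
  exact Or.inr ⟨⟨r.ibody.length - 1, by omega⟩, fun a _ => hidb a, hidb _,
    fun a ha => absurd a.2 (by simp only [Fin.lt_def] at ha; omega)⟩

end SemiNaive

section Evaluation

variable (seq : ℕ → SRule Pred C V ar) (I : Set (Fact Pred C ar))

lemma lastApp_eq_zero_or (i : ℕ) :
    lastApp seq i = 0 ∨ 1 ≤ lastApp seq i ∧ lastApp seq i < i ∧ seq (lastApp seq i) = seq i := by
  rcases Set.eq_empty_or_nonempty {k | 1 ≤ k ∧ k < i ∧ seq k = seq i} with h | h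
  · exact Or.inl (by rw [lastApp, h, csSup_empty, Nat.bot_eq_zero])
  · exact Or.inr (Nat.sSup_mem h ⟨i, fun k hk => hk.2.1.le⟩)

lemma lastApp_le (i : ℕ) : lastApp seq i ≤ i := by
  rcases lastApp_eq_zero_or seq i with h | h <;> omega

lemma sneHist_eq_sneDelta {i k : ℕ} (hk : k ≤ i) : sneHist seq I i k = sneDelta seq I k := by
  induction i with
  | zero => rw [Nat.le_zero.mp hk]; rfl
  | succ i ih =>
    rcases Nat.lt_or_ge k (i + 1) with hki | hki
    · simp only [sneHist, if_neg hki.ne, ih (by omega)]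
    · rw [show k = i + 1 by omega]; rfl

lemma sneDelta_succ (i : ℕ) :
    sneDelta seq I (i + 1) =
      sneTmp I (seq (i + 1)) (lastApp seq (i + 1)) i (sneDelta seq I) \
        cumRange (sneDelta seq I) 0 i := by
  have h : ∀ k ≤ i, sneHist seq I i k = sneDelta seq I k :=
    fun k hk => sneHist_eq_sneDelta seq I hk
  simp only [sneDelta, sneHist, if_true]
  rw [sneTmp_congr I _ (lastApp_le seq _) h, cumRange_congr h]

lemma cumRange_sneDelta_succ (i : ℕ) :
    cumRange (sneDelta seq I) 0 (i + 1) =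
      cumRange (sneDelta seq I) 0 i ∪
        sneTmp I (seq (i + 1)) (lastApp seq (i + 1)) i (sneDelta seq I) := by
  rw [cumRange_succ (Nat.zero_le _), sneDelta_succ, Set.union_sdiff_self]

lemma I_subset_cumRange_sneDelta (i : ℕ) : I ⊆ cumRange (sneDelta seq I) 0 i :=
  fun _ hf => mem_cumRange.mpr ⟨0, le_rfl, Nat.zero_le i, hf⟩

lemma head_mem_cumRange_sneDelta (i : ℕ) (g : V → C)
    (hedb : ∀ e ∈ (seq (i + 1)).ebody, Atom.grnd g e ∈ I)
    (hidb : ∀ a, Atom.grnd g ((seq (i + 1)).ibody.get a) ∈ cumRange (sneDelta seq I) 0 i) :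
    Atom.grnd g (seq (i + 1)).head ∈ cumRange (sneDelta seq I) 0 (i + 1) := by
  induction i using Nat.strong_induction_on with
  | _ i ih =>
  rw [cumRange_sneDelta_succ]
  set j := lastApp seq (i + 1)
  by_cases hold : j ≠ 0 ∧
      ∀ a, Atom.grnd g ((seq (i + 1)).ibody.get a) ∈ cumRange (sneDelta seq I) 0 (j - 1)
  · obtain ⟨hj0, hold⟩ := hold
    obtain ⟨-, hji, hseqj⟩ := (lastApp_eq_zero_or seq (i + 1)).resolve_left hj0
    have hj : j - 1 + 1 = j := by omega
    have hfired := ih (j - 1) (by omega) (by rwa [hj, hseqj]) (by rwa [hj, hseqj])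
    rw [hj, hseqj] at hfired
    exact Or.inl (cumRange_mono le_rfl (by omega) hfired)
  · right
    rw [not_and_or, not_not, not_forall] at hold
    rcases hold with hj0 | hnew
    · rw [hj0]
      exact head_mem_sneTmp_of_zero hedb hidb
    · exact head_mem_sneTmp_of_exists_new hedb hidb hnew

lemma mem_of_mem_naiveS_of_not_isIDB {Prog : Set (SRule Pred C V ar)}
    (hseq : ∀ k, 1 ≤ k → seq k ∈ Prog) {f : Fact Pred C ar} {i : ℕ}
    (hf : f ∈ naiveS seq I i) (hp : ¬ isIDB Prog f.pred) : f ∈ I := by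
  induction i with
  | zero => exact hf
  | succ i ih =>
    rcases hf with hf | ⟨g, rfl, -⟩
    · exact ih hf
    · exact absurd ⟨seq (i + 1), hseq (i + 1) (by omega), rfl⟩ hp

theorem cumRange_sneDelta_eq_naiveS {Prog : Set (SRule Pred C V ar)}
    (hseq : ∀ k, 1 ≤ k → seq k ∈ Prog)
    (hedb : ∀ r ∈ Prog, ∀ a ∈ r.ebody, ¬ isIDB Prog a.pred) (i : ℕ) :
    cumRange (sneDelta seq I) 0 i = naiveS seq I i := by
  induction i with
  | zero => exact cumRange_zero_zero
  | succ i ih =>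
    rw [cumRange_sneDelta_succ, naiveS, ← ih]
    refine Set.union_subset_union_right _ ?_ |>.antisymm ?_
    · exact sneTmp_subset_app I _ (by have := lastApp_le seq (i + 1); omega)
        (I_subset_cumRange_sneDelta seq I i)
    rintro f (hf | ⟨g, rfl, hbody⟩)
    · exact Or.inl hf
    rw [← cumRange_sneDelta_succ]
    refine head_mem_cumRange_sneDelta seq I i g (fun e he => ?_)
      fun a => hbody _ (List.mem_append_right _ (List.get_mem _ a))
    have hnaive : Atom.grnd g e ∈ naiveS seq I i := ih ▸ hbody e (List.mem_append_left _ he)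
    exact mem_of_mem_naiveS_of_not_isIDB seq I hseq hnaive
      (hedb _ (hseq (i + 1) (by omega)) e he)

end Evaluation

theorem sne_equals_naive_general {Pred C V : Type}
    {ar : Pred → ℕ}
    (Prog : Set (SRule Pred C V ar))
    (hstruct : ∀ r ∈ Prog, (∀ a ∈ r.ebody, ¬ isIDB Prog a.pred) ∧
      ∀ a ∈ r.ibody, isIDB Prog a.pred)
    (I : Set (Fact Pred C ar))
    (seq : ℕ → SRule Pred C V ar) (hseq : ∀ k, 1 ≤ k → seq k ∈ Prog) :
    ∀ (p : Pred) (i : ℕ),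
      {f | f ∈ cumRange (sneDelta seq I) 0 i ∧ f.pred = p} =
      {f | f ∈ naiveS seq I i ∧ f.pred = p} := by
  intro p i
  rw [cumRange_sneDelta_eq_naiveS seq I hseq fun r hr => (hstruct r hr).1]

/-- The one-rule-per-step semi-naive evaluation produces exactly the
same inferences as the naive rule-by-rule evaluation based on the same fair sequence of
rules: for every predicate `p` and every step `i ≥ 0`, the set `Δ^{[0,i]}_p` computed
by SNE equals the set of facts with predicate `p` contained in `P̂ⁱ(I)`. -/
theorem sne_equals_naive {Pred C V : Type} [Infinite C] [Infinite V]
    {ar : Pred → ℕ}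
    (Prog : Set (SRule Pred C V ar)) (hfin : Prog.Finite)
    (hsafe : ∀ r ∈ Prog, r.safe)
    (hstruct : ∀ r ∈ Prog, (∀ a ∈ r.ebody, ¬ isIDB Prog a.pred) ∧
      ∀ a ∈ r.ibody, isIDB Prog a.pred)
    (I : Set (Fact Pred C ar)) (hI : I.Finite)
    (hIedb : ∀ f ∈ I, ¬ isIDB Prog f.pred)
    (seq : ℕ → SRule Pred C V ar) (hseq : ∀ k, 1 ≤ k → seq k ∈ Prog)
    (hfair : ∀ r ∈ Prog, ∀ N, ∃ k, N ≤ k ∧ seq k = r) :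
    ∀ (p : Pred) (i : ℕ),
      {f | f ∈ cumRange (sneDelta seq I) 0 i ∧ f.pred = p} =
      {f | f ∈ naiveS seq I i ∧ f.pred = p} :=
  sne_equals_naive_general Prog hstruct I seq hseq
end Datalog
end

section
/- The semi-naive rewriting covers all naive inferences: let rule r = p(t⃗) ← e₁(t⃗₁),…,eₙ(t⃗ₙ), q₁(s⃗₁),…,q_m(s⃗_m) be applied at step i+1 and last applied at step j ≤ i. For every ground substitution σ with e_b(t⃗_b)σ ∈ I for all b and s⃗_aσ ∈ Δ^{[0,i]}_{q_a} for all a ∈ {1,…,m}, either (1) s⃗_aσ ∈ Δ^{[0,j−1]}_{q_a} for all a ∈ {1,…,m}, or (2) there exists ℓ ∈ {1,…,m} such that s⃗_aσ ∈ Δ^{[0,i]}_{q_a} for all a < ℓ, s⃗_ℓσ ∈ Δ^{[j,i]}_{q_ℓ}, and s⃗_aσ ∈ Δ^{[0,j−1]}_{q_a} for all a > ℓ (so p(t⃗)σ ∈ tmp_p). -/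
namespace Datalog

variable {Pred C V : Type} {ar : Pred → ℕ}

/-- The semi-naive rewriting covers all naive inferences: let rule
`r = p(t⃗) ← e₁(t⃗₁),…,eₙ(t⃗ₙ), q₁(s⃗₁),…,q_m(s⃗_m)` be applied at step `i+1` and last
applied at step `j ≤ i`. For every ground substitution `σ` with `e_b(t⃗_b)σ ∈ I` for
all `b` and `s⃗_aσ ∈ Δ^{[0,i]}_{q_a}` for all `a ∈ {1,…,m}`, either (1)
`s⃗_aσ ∈ Δ^{[0,j−1]}_{q_a}` for all `a`, or (2) there exists `ℓ` such that
`s⃗_aσ ∈ Δ^{[0,i]}_{q_a}` for all `a < ℓ`, `s⃗_ℓσ ∈ Δ^{[j,i]}_{q_ℓ}`, and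
`s⃗_aσ ∈ Δ^{[0,j−1]}_{q_a}` for all `a > ℓ` (so `p(t⃗)σ ∈ tmp_p`). -/
theorem sne_covers_naive_inferences {Pred C V : Type} [Infinite C] [Infinite V]
    {ar : Pred → ℕ}
    (Prog : Set (SRule Pred C V ar)) (hfin : Prog.Finite)
    (hsafe : ∀ r ∈ Prog, r.safe)
    (hstruct : ∀ r ∈ Prog, (∀ a ∈ r.ebody, ¬ isIDB Prog a.pred) ∧
      ∀ a ∈ r.ibody, isIDB Prog a.pred)
    (I : Set (Fact Pred C ar)) (hI : I.Finite)
    (hIedb : ∀ f ∈ I, ¬ isIDB Prog f.pred)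
    (seq : ℕ → SRule Pred C V ar) (hseq : ∀ k, 1 ≤ k → seq k ∈ Prog)
    (i : ℕ) (r : SRule Pred C V ar) (hr : r = seq (i + 1))
    (j : ℕ) (hj : j = lastApp seq (i + 1)) :
    ∀ g : V → C,
      (∀ e ∈ r.ebody, Atom.grnd g e ∈ I) →
      (∀ a : Fin r.ibody.length,
        Atom.grnd g (r.ibody.get a) ∈ cumRange (sneDelta seq I) 0 i) →
      ((∀ a : Fin r.ibody.length,
          Atom.grnd g (r.ibody.get a) ∈ cumRange (sneDelta seq I) 0 (j - 1)) ∨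
       ∃ ℓ : Fin r.ibody.length,
         (∀ a : Fin r.ibody.length, a < ℓ →
            Atom.grnd g (r.ibody.get a) ∈ cumRange (sneDelta seq I) 0 i) ∧
         Atom.grnd g (r.ibody.get ℓ) ∈ cumRange (sneDelta seq I) j i ∧
         (∀ a : Fin r.ibody.length, ℓ < a →
            Atom.grnd g (r.ibody.get a) ∈ cumRange (sneDelta seq I) 0 (j - 1))) := by
  classical
  intro g hE hAll
  by_cases hcase : ∀ a : Fin r.ibody.length,
      Atom.grnd g (r.ibody.get a) ∈ cumRange (sneDelta seq I) 0 (j - 1)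
  · exact Or.inl hcase
  · right
    push_neg at hcase
    obtain ⟨a0, ha0⟩ := hcase
    set T : Finset (Fin r.ibody.length) :=
      Finset.univ.filter (fun a =>
        Atom.grnd g (r.ibody.get a) ∉ cumRange (sneDelta seq I) 0 (j - 1)) with hTdef
    have hT : T.Nonempty := ⟨a0, by simp only [hTdef, Finset.mem_filter, Finset.mem_univ, true_and]; exact ha0⟩
    set ℓ := T.max' hT with hℓdef
    have hℓmem : ℓ ∈ T := T.max'_mem hT
    have hℓnot : Atom.grnd g (r.ibody.get ℓ) ∉ cumRange (sneDelta seq I) 0 (j - 1) := by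
      simpa [hTdef] using hℓmem
    refine ⟨ℓ, fun a _ => hAll a, ?_, ?_⟩
    · have h1 := hAll ℓ
      simp only [cumRange, Set.mem_iUnion, exists_prop] at h1 ⊢
      obtain ⟨k, hk, hkmem⟩ := h1
      rw [Set.mem_Icc] at hk
      refine ⟨k, ?_, hkmem⟩
      rw [Set.mem_Icc]
      refine ⟨?_, hk.2⟩
      by_contra hlt
      push_neg at hlt
      exact hℓnot (Set.mem_iUnion₂.mpr ⟨k, Set.mem_Icc.mpr ⟨Nat.zero_le _, by omega⟩, hkmem⟩)
    · intro a hlt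
      by_contra hnot
      have haT : a ∈ T := by simp only [hTdef, Finset.mem_filter, Finset.mem_univ, true_and]; exact hnot
      exact absurd (T.le_max' a haT) (not_le.mpr hlt)
end Datalog
end

section
/- Dynamic subsumption optimization: suppose rule r = p(t⃗) ← e₁(t⃗₁),…,eₙ(t⃗ₙ), q₁(s⃗₁),…,q_m(s⃗_m) is applied at step i+1 via one of its SNE variants with ranges [l_a,u_a] ⊆ [0,i] for its IDB body atoms, let o ∈ [l_k,u_k] be a step at which rule r(o) was applied, and let r_o be the resolvent of r with r(o) on the atom q_k(s⃗_k). If r_o is subsumed by a rule r' ∈ P (i.e., r_o(J) ⊆ r'(J) for all sets of facts J) and every inference of r' over the set F := I ∪ ⋃_q Δ^{[0,i]}_q is already contained in F (i.e., r'(F) ⊆ F), then the set of new facts Δ^{i+1}_p derived at step i+1 (derived facts minus all facts in Δ^{[0,i]}_p) is unchanged when the relation Δ^{[l_k,u_k]}_{q_k} used for the atom q_k(s⃗_k) is replaced by Δ^{[l_k,u_k]}_{q_k} \ Δ^o_{q_k}. -/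
namespace Datalog

variable {Pred C V : Type} {ar : Pred → ℕ}

section Aux

variable {Pred C V : Type} {ar : Pred → ℕ}

private theorem fact_ext {f₁ f₂ : Fact Pred C ar} (hp : f₁.pred = f₂.pred)
    (ha : f₁.args = f₂.args) : f₁ = f₂ := by
  cases f₁; cases f₂; cases hp; cases ha; rfl

private theorem term_grnd_eq_of_vars {g g' : V → C} {t : Term C V}
    (h : ∀ v ∈ Term.vars t, g v = g' v) : Term.grnd g t = Term.grnd g' t := by
  cases t with
  | const c => rfl
  | var v => exact h v rfl

private theorem atom_grnd_eq_of_vars {g g' : V → C} {A : Atom Pred C V ar}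
    (h : ∀ v ∈ A.vars, g v = g' v) : Atom.grnd g A = Atom.grnd g' A := by
  refine fact_ext rfl ?_
  refine List.map_congr_left (fun t ht => ?_)
  exact term_grnd_eq_of_vars (fun v hv => h v (Set.mem_biUnion ht hv))

private theorem atom_ext {A B : Atom Pred C V ar} (hp : A.pred = B.pred)
    (ha : A.args = B.args) : A = B := by
  cases A; cases B; cases hp; cases ha; rfl

private theorem subst_grndSub (g : V → C) (A : Atom Pred C V ar) :
    Atom.subst (grndSub g) A = Fact.toAtom (Atom.grnd g A) := by
  refine atom_ext rfl ?_
  show A.args.map (Term.subst (grndSub g)) = (A.args.map (Term.grnd g)).map Term.const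
  rw [List.map_map]
  refine List.map_congr_left (fun t _ => ?_)
  cases t <;> rfl

private theorem grnd_comp {G' G : V → C} {δ θ : V → Term C V}
    (hδ : ∀ v, Term.const (G v) = Term.subst δ (θ v))
    (hG' : ∀ w c, δ w = Term.const c → G' w = c) (A : Atom Pred C V ar) :
    Atom.grnd G' (Atom.subst θ A) = Atom.grnd G A := by
  refine fact_ext rfl ?_
  simp only [Atom.subst, Atom.grnd, List.map_map]
  refine List.map_congr_left (fun t _ => ?_)
  cases t with
  | const c => rfl
  | var v =>
    show Term.grnd G' (θ v) = G v
    cases hθv : θ v with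
    | const c =>
      have := hδ v; rw [hθv] at this
      simp only [Term.subst] at this
      cases this; rfl
    | var w =>
      have := hδ v; rw [hθv] at this
      simp only [Term.subst] at this
      exact hG' w (G v) this.symm

private theorem grnd_rename {ι : V → V} {g₁ g₀ : V → C}
    (h : ∀ v, g₁ (ι v) = g₀ v) (A : Atom Pred C V ar) :
    Atom.grnd g₁ (Atom.subst (fun v => Term.var (ι v)) A) = Atom.grnd g₀ A := by
  refine fact_ext rfl ?_
  simp only [Atom.subst, Atom.grnd, List.map_map]
  refine List.map_congr_left (fun t _ => ?_)
  cases t with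
  | const c => rfl
  | var v => exact h v

private theorem head_vars_subset (r : SRule Pred C V ar) : r.head.vars ⊆ r.vars :=
  Set.subset_union_left

private theorem ebody_vars_subset {r : SRule Pred C V ar} {A : Atom Pred C V ar}
    (h : A ∈ r.ebody) : A.vars ⊆ r.vars := by
  intro v hv
  exact Or.inr (Or.inl (Set.mem_biUnion h hv))

private theorem ibody_vars_subset {r : SRule Pred C V ar} {A : Atom Pred C V ar}
    (h : A ∈ r.ibody) : A.vars ⊆ r.vars := by
  intro v hv
  exact Or.inr (Or.inr (Set.mem_biUnion h hv))

private theorem sneHist_stable (seq : ℕ → SRule Pred C V ar) (I : Set (Fact Pred C ar)) :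
    ∀ i k, k ≤ i → sneHist seq I i k = sneDelta seq I k := by
  intro i
  induction i with
  | zero => intro k hk; interval_cases k; rfl
  | succ n ih =>
    intro k hk
    by_cases h : k = n + 1
    · subst h; rfl
    · have : sneHist seq I (n + 1) k = sneHist seq I n k := by
        show (if k = n + 1 then _ else sneHist seq I n k) = _
        rw [if_neg h]
      rw [this]; exact ih k (by omega)

private theorem sneHist_empty (seq : ℕ → SRule Pred C V ar) (I : Set (Fact Pred C ar)) :
    ∀ i k, i < k → sneHist seq I i k = ∅ := by
  intro i
  induction i with
  | zero => intro k hk; show (if k = 0 then I else ∅) = ∅; rw [if_neg (by omega)]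
  | succ n ih =>
    intro k hk
    have : sneHist seq I (n + 1) k = sneHist seq I n k := by
      show (if k = n + 1 then _ else sneHist seq I n k) = _
      rw [if_neg (by omega)]
    rw [this]; exact ih k (by omega)

private theorem cumHist_subset (seq : ℕ → SRule Pred C V ar) (I : Set (Fact Pred C ar))
    {m i : ℕ} (hmi : m ≤ i) (a b : ℕ) :
    cumRange (sneHist seq I m) a b ⊆ cumRange (sneDelta seq I) 0 i := by
  intro f hf
  obtain ⟨kk, hkk, hmem⟩ := Set.mem_iUnion₂.mp hf
  by_cases h : kk ≤ m
  · rw [sneHist_stable seq I m kk h] at hmem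
    exact Set.mem_iUnion₂.mpr ⟨kk, ⟨Nat.zero_le _, le_trans h hmi⟩, hmem⟩
  · rw [sneHist_empty seq I m kk (by omega)] at hmem
    exact absurd hmem (Set.notMem_empty f)

private theorem cumRange_mono_s15 (D : ℕ → Set (Fact Pred C ar)) {a b a' b' : ℕ}
    (h1 : a' ≤ a) (h2 : b ≤ b') : cumRange D a b ⊆ cumRange D a' b' := by
  intro f hf
  obtain ⟨kk, hkk, hmem⟩ := Set.mem_iUnion₂.mp hf
  exact Set.mem_iUnion₂.mpr ⟨kk, ⟨le_trans h1 hkk.1, le_trans hkk.2 h2⟩, hmem⟩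

end Aux

/-- **Dynamic subsumption optimization.** Suppose rule `r` is applied at
step `i+1` via one of its SNE variants with ranges `[l_a, u_a] ⊆ [0,i]` for its IDB
body atoms, let `o ∈ [l_k, u_k]` be a step at which rule `r(o)` was applied, and let
`r_o` be the resolvent of `r` with `r(o)` (variables renamed apart by `ι`, most general
unifier `θ`) on the atom `q_k(s⃗_k)`. If `r_o` is subsumed by a rule `r' ∈ P` (i.e.
`r_o(J) ⊆ r'(J)` for all sets of facts `J`) and every inference of `r'` over the set
`F := I ∪ ⋃_q Δ^{[0,i]}_q` is already contained in `F` (i.e. `r'(F) ⊆ F`), then the set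
of new facts `Δ^{i+1}_p` derived at step `i+1` (derived facts minus all facts in
`Δ^{[0,i]}_p`) is unchanged when the relation `Δ^{[l_k,u_k]}_{q_k}` used for the atom
`q_k(s⃗_k)` is replaced by `Δ^{[l_k,u_k]}_{q_k} \ Δ^o_{q_k}`. -/
theorem subsumed_rules_optimization {Pred C V : Type} [Infinite C] [Infinite V]
    {ar : Pred → ℕ}
    (Prog : Set (SRule Pred C V ar)) (hfin : Prog.Finite)
    (hsafe : ∀ r ∈ Prog, r.safe)
    (hstruct : ∀ r ∈ Prog, (∀ a ∈ r.ebody, ¬ isIDB Prog a.pred) ∧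
      ∀ a ∈ r.ibody, isIDB Prog a.pred)
    (I : Set (Fact Pred C ar)) (hI : I.Finite)
    (hIedb : ∀ f ∈ I, ¬ isIDB Prog f.pred)
    (seq : ℕ → SRule Pred C V ar) (hseq : ∀ k, 1 ≤ k → seq k ∈ Prog)
    (i : ℕ) (r : SRule Pred C V ar) (hr : r = seq (i + 1))
    (l u : ℕ → ℕ) (hrange : ∀ a : Fin r.ibody.length, u a ≤ i)
    (k : Fin r.ibody.length)
    (o : ℕ) (ho1 : 1 ≤ o) (hol : l k ≤ o) (hou : o ≤ u k)
    (ro' : SRule Pred C V ar) (ι : V → V) (hι : Function.Injective ι)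
    (hro' : ro' = SRule.rename ι (seq o))
    (hdisj : Disjoint (SRule.vars ro') (SRule.vars r))
    (θ : V → Term C V) (hθ : isMGU θ (r.ibody.get k) ro'.head)
    (r' : SRule Pred C V ar) (hr' : r' ∈ Prog)
    (hsub : ∀ J : Set (Fact Pred C ar),
      Rule.app (resolvent r ro' k θ) J ⊆ Rule.app r'.toRule J)
    (hclosed : Rule.app r'.toRule (I ∪ cumRange (sneDelta seq I) 0 i) ⊆
      I ∪ cumRange (sneDelta seq I) 0 i) :
    sneVariant I r (fun a => cumRange (sneDelta seq I) (l a) (u a)) \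
        cumRange (sneDelta seq I) 0 i =
    sneVariant I r (fun a =>
        if a = (k : ℕ) then cumRange (sneDelta seq I) (l a) (u a) \ sneDelta seq I o
        else cumRange (sneDelta seq I) (l a) (u a)) \
      cumRange (sneDelta seq I) 0 i := by
  classical
  ext f
  simp only [Set.mem_diff]
  constructor
  · rintro ⟨hf, hnot⟩
    refine ⟨?_, hnot⟩
    obtain ⟨g, hfg, hEb, hIb⟩ := hf
    have key : Atom.grnd g (r.ibody.get k) ∈ sneDelta seq I o →
        f ∈ cumRange (sneDelta seq I) 0 i := by
      intro hko
      obtain ⟨m, rfl⟩ : ∃ m, o = m + 1 := ⟨o - 1, by omega⟩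
      have hmi : m ≤ i := by have := hrange k; omega
      have hδeq : sneDelta seq I (m + 1) =
          sneTmp I (seq (m + 1)) (lastApp seq (m + 1)) m (sneHist seq I m) \
            cumRange (sneHist seq I m) 0 m := by
        show (if m + 1 = m + 1 then
            sneTmp I (seq (m + 1)) (lastApp seq (m + 1)) m (sneHist seq I m) \
              cumRange (sneHist seq I m) 0 m
          else sneHist seq I m (m + 1)) = _
        exact if_pos rfl
      rw [hδeq] at hko
      obtain ⟨g₀, hfk, hEb₀, hIb₀⟩ := hko.1
      -- all IDB body facts of seq (m+1) under g₀ are in Δ^{[0,i]}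
      have hib : ∀ a : Fin (seq (m + 1)).ibody.length,
          Atom.grnd g₀ ((seq (m + 1)).ibody.get a) ∈ cumRange (sneDelta seq I) 0 i := by
        intro a
        rcases hIb₀ with hnil | ⟨ℓ, h1, h2, h3⟩
        · exact absurd a.isLt (by simp [hnil])
        · rcases lt_trichotomy a ℓ with h | h | h
          · exact cumHist_subset seq I hmi 0 m (h1 a h)
          · rw [h]; exact cumHist_subset seq I hmi _ m h2
          · exact cumHist_subset seq I hmi 0 _ (h3 a h)
      -- the ground substitution for the renamed rule ro'
      set g₁ : V → C := fun w => if h : ∃ v, ι v = w then g₀ h.choose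
        else g₀ (Classical.arbitrary V) with hg₁def
      have hg₁ : ∀ v, g₁ (ι v) = g₀ v := by
        intro v
        have hex : ∃ v', ι v' = ι v := ⟨v, rfl⟩
        simp only [hg₁def, dif_pos hex]
        exact congrArg g₀ (hι hex.choose_spec)
      -- the combined ground substitution
      set G : V → C := fun w => if w ∈ SRule.vars ro' then g₁ w else g w with hGdef
      have hGr : ∀ A : Atom Pred C V ar, A.vars ⊆ SRule.vars r →
          Atom.grnd G A = Atom.grnd g A := by
        intro A hA
        refine atom_grnd_eq_of_vars (fun v hv => ?_)
        have hvne : v ∉ SRule.vars ro' := Set.disjoint_right.mp hdisj (hA hv)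
        simp only [hGdef, if_neg hvne]
      have hGro : ∀ A : Atom Pred C V ar, A.vars ⊆ SRule.vars ro' →
          Atom.grnd G A = Atom.grnd g₁ A := by
        intro A hA
        refine atom_grnd_eq_of_vars (fun v hv => ?_)
        simp only [hGdef, if_pos (hA hv)]
      have hren : ∀ A : Atom Pred C V ar,
          Atom.grnd g₁ (Atom.subst (fun v => Term.var (ι v)) A) = Atom.grnd g₀ A :=
        grnd_rename hg₁
      have hkmem : r.ibody.get k ∈ r.ibody := List.mem_iff_get.mpr ⟨k, rfl⟩
      have hkG : Atom.grnd G (r.ibody.get k) = Atom.grnd g (r.ibody.get k) :=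
        hGr _ (ibody_vars_subset hkmem)
      have hheadG : Atom.grnd G ro'.head = Atom.grnd g₀ (seq (m + 1)).head := by
        rw [hGro ro'.head (head_vars_subset ro'), hro']
        exact hren _
      -- grndSub G unifies the k-th IDB atom of r with the head of ro'
      have hun : Atom.subst (grndSub G) (r.ibody.get k) =
          Atom.subst (grndSub G) ro'.head := by
        rw [subst_grndSub, subst_grndSub, hkG, hheadG, hfk]
      obtain ⟨δ, hδ⟩ := hθ.2 (grndSub G) hun
      set G' : V → C := fun w => match δ w with
        | .const c => c
        | .var _ => G w
        with hG'def
      have hG' : ∀ w c, δ w = Term.const c → G' w = c := by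
        intro w c h; simp only [hG'def]; rw [h]
      have hcomp : ∀ A : Atom Pred C V ar,
          Atom.grnd G' (Atom.subst θ A) = Atom.grnd G A :=
        grnd_comp (fun v => hδ v) hG'
      -- f is derived by the resolvent over F
      have hres : f ∈ Rule.app (resolvent r ro' k θ)
          (I ∪ cumRange (sneDelta seq I) 0 i) := by
        refine ⟨G', ?_, ?_⟩
        · show f = Atom.grnd G' (Atom.subst θ r.head)
          rw [hcomp r.head, hGr r.head (head_vars_subset r)]
          exact hfg
        · intro b hb
          obtain ⟨B, hB, rfl⟩ := List.mem_map.mp hb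
          rw [hcomp B]
          simp only [List.mem_append] at hB
          rcases hB with ((hB | hB) | hB | hB) | hB
          · rw [hGr B (ebody_vars_subset hB)]
            exact Or.inl (hEb B hB)
          · have hB' : B ∈ r.ibody := List.mem_of_mem_take hB
            obtain ⟨a, ha⟩ := List.mem_iff_get.mp hB'
            rw [hGr B (ibody_vars_subset hB'), ← ha]
            exact Or.inr (cumRange_mono_s15 _ (Nat.zero_le _) (hrange a) (hIb a))
          · have hvars := ebody_vars_subset hB
            rw [hro'] at hB
            obtain ⟨E, hEmem, hBE⟩ := List.mem_map.mp hB
            rw [hGro B hvars, ← hBE, hren E]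
            exact Or.inl (hEb₀ E hEmem)
          · have hvars := ibody_vars_subset hB
            rw [hro'] at hB
            obtain ⟨E, hEmem, hBE⟩ := List.mem_map.mp hB
            obtain ⟨a, ha⟩ := List.mem_iff_get.mp hEmem
            rw [hGro B hvars, ← hBE, hren E, ← ha]
            exact Or.inr (hib a)
          · have hB' : B ∈ r.ibody := List.mem_of_mem_drop hB
            obtain ⟨a, ha⟩ := List.mem_iff_get.mp hB'
            rw [hGr B (ibody_vars_subset hB'), ← ha]
            exact Or.inr (cumRange_mono_s15 _ (Nat.zero_le _) (hrange a) (hIb a))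
      have hfF : f ∈ I ∪ cumRange (sneDelta seq I) 0 i := hclosed (hsub _ hres)
      rcases hfF with hfI | hfc
      · refine Set.mem_iUnion₂.mpr ⟨0, ⟨le_rfl, Nat.zero_le i⟩, ?_⟩
        show f ∈ sneDelta seq I 0
        exact hfI
      · exact hfc
    refine ⟨g, hfg, hEb, fun a => ?_⟩
    by_cases hak : (a : ℕ) = (k : ℕ)
    · have haek : a = k := Fin.ext hak
      subst haek
      beta_reduce
      rw [if_pos rfl]
      exact ⟨hIb a, fun hmem => hnot (key hmem)⟩
    · beta_reduce
      rw [if_neg hak]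
      exact hIb a
  · rintro ⟨⟨g, hfg, hEb, hIb⟩, hnot⟩
    refine ⟨⟨g, hfg, hEb, fun a => ?_⟩, hnot⟩
    have ha := hIb a
    beta_reduce at ha
    by_cases hak : (a : ℕ) = (k : ℕ)
    · rw [if_pos hak] at ha
      exact ha.1
    · rw [if_neg hak] at ha
      exact ha
end Datalog
end
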